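/- arXiv:2602.04686 — 2 statements merged into one kernel-verified Lean document; each statement's English description precedes it below -/
import Mathlib

section
/- If Φ(t) = t ln(1+t), then its Young conjugate satisfies Φ*(t) ≍ cosh(t) − 1, i.e., there exist constants c, C > 0 with c(cosh t − 1) ≤ Φ*(t) ≤ C(cosh t − 1) for all t ≥ 0. -/
/-!
Since `log (1 + s) ≤ s`, `Φ(s) = s log (1 + s)` dominates `Ψ(s) = (1 + s) log (1 + s) - s`, whose
conjugate is `e^t - t - 1 ≤ 2 (cosh t - 1)`; this gives the upper bound. For the lower bound, the
witness `s = e^(t - a) - 1` with `a ≤ t` yields `Φ*(t) ≥ a (e^(t - a) - 1)`, and `a = t / 2` for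
`t ≤ 2`, `a = 1` for `t ≥ 2` make this at least `(cosh t - 1) / 4`.
-/

open Real ENNReal

/-- The Young conjugate of `Φ(s) = s ln(1+s)`, as an `ℝ≥0∞`-valued supremum. -/
noncomputable def conjLogPhi (t : ℝ) : ℝ≥0∞ :=
  ⨆ (s : ℝ) (_ : 0 ≤ s), ENNReal.ofReal (s * t - s * Real.log (1 + s))

namespace Real

theorem mul_sub_mul_log_one_add_le_exp_sub_sub_one {s : ℝ} (hs : 0 ≤ s) (t : ℝ) :
    s * t - s * log (1 + s) ≤ exp t - t - 1 := by
  have h1s : 0 < 1 + s := by linarith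
  have hlog : log (1 + s) ≤ s := by linarith [log_le_sub_one_of_pos h1s]
  have hyoung : (1 + s) * (1 + (t - log (1 + s))) ≤ exp t := by
    calc (1 + s) * (1 + (t - log (1 + s))) ≤ (1 + s) * exp (t - log (1 + s)) :=
          mul_le_mul_of_nonneg_left (by linarith [add_one_le_exp (t - log (1 + s))]) h1s.le
      _ = exp t := by rw [exp_sub, exp_log h1s, mul_div_cancel₀ _ h1s.ne']
  nlinarith

theorem exp_sub_sub_one_le_two_mul_cosh_sub_one (t : ℝ) : exp t - t - 1 ≤ 2 * (cosh t - 1) := by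
  have := add_one_le_exp (-t)
  rw [cosh_eq]
  linarith

theorem sinh_le_exp_sub_one (x : ℝ) : sinh x ≤ exp x - 1 := by
  rw [← exp_sub_cosh]
  linarith [one_le_cosh x]

theorem cosh_two_mul_sub_one_le {x : ℝ} (hx : 0 ≤ x) : cosh (2 * x) - 1 ≤ 2 * (exp x - 1) ^ 2 := by
  have hsinh : sinh x ^ 2 ≤ (exp x - 1) ^ 2 :=
    pow_le_pow_left₀ (sinh_nonneg_iff.mpr hx) (sinh_le_exp_sub_one x) 2
  rw [cosh_two_mul, cosh_sq]
  linarith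

theorem exists_cosh_sub_one_le_mul_exp_sub_one {t : ℝ} (ht : 0 ≤ t) :
    ∃ a ≤ t, cosh t - 1 ≤ 4 * (a * (exp (t - a) - 1)) := by
  rcases le_total t 2 with ht2 | ht2
  · refine ⟨t / 2, by linarith, ?_⟩
    have hu : 0 ≤ exp (t / 2) - 1 := by linarith [add_one_le_exp (t / 2)]
    have hut : exp (t / 2) - 1 ≤ t := by
      have := abs_exp_sub_one_le (x := t / 2) (by rw [abs_of_nonneg (by linarith)]; linarith)
      rwa [abs_of_nonneg hu, abs_of_nonneg (by linarith), mul_div_cancel₀ _ two_ne_zero] at this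
    calc cosh t - 1 = cosh (2 * (t / 2)) - 1 := by ring_nf
      _ ≤ 2 * (exp (t / 2) - 1) ^ 2 := cosh_two_mul_sub_one_le (by linarith)
      _ ≤ 2 * t * (exp (t / 2) - 1) := by rw [sq, ← mul_assoc]; gcongr
      _ = 4 * (t / 2 * (exp (t - t / 2) - 1)) := by ring_nf
  · refine ⟨1, by linarith, ?_⟩
    have hbig : 2 ≤ exp (t - 1) := by linarith [add_one_le_exp (t - 1)]
    calc cosh t - 1 ≤ exp t / 2 := by
          rw [cosh_eq]
          linarith [exp_le_one_iff.mpr (neg_nonpos.mpr ht)]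
      _ = exp 1 * exp (t - 1) / 2 := by rw [← exp_add, add_sub_cancel]
      _ ≤ 3 * exp (t - 1) / 2 := by gcongr; exact exp_one_lt_three.le
      _ ≤ 4 * (1 * (exp (t - 1) - 1)) := by linarith

end Real

theorem conjLogPhi_le_ofReal_exp_sub_sub_one (t : ℝ) :
    conjLogPhi t ≤ ENNReal.ofReal (exp t - t - 1) :=
  iSup₂_le fun _ hs => ofReal_le_ofReal (mul_sub_mul_log_one_add_le_exp_sub_sub_one hs t)

theorem ofReal_mul_exp_sub_sub_one_le_conjLogPhi {a t : ℝ} (hat : a ≤ t) :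
    ENNReal.ofReal (a * (exp (t - a) - 1)) ≤ conjLogPhi t := by
  have hs : 0 ≤ exp (t - a) - 1 := by linarith [one_le_exp (sub_nonneg.mpr hat)]
  refine le_iSup₂_of_le (exp (t - a) - 1) hs (le_of_eq ?_)
  rw [add_sub_cancel, log_exp]
  ring_nf

/-- If `Φ(t) = t ln(1+t)`, then `Φ*(t) ≍ cosh(t) − 1`. -/
theorem conj_tlog_asymp_cosh :
    ∃ c C : ℝ, 0 < c ∧ 0 < C ∧ ∀ t : ℝ, 0 ≤ t →
      ENNReal.ofReal (c * (Real.cosh t - 1)) ≤ conjLogPhi t ∧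
      conjLogPhi t ≤ ENNReal.ofReal (C * (Real.cosh t - 1)) := by
  refine ⟨4⁻¹, 2, by norm_num, two_pos, fun t ht => ⟨?_, ?_⟩⟩
  · obtain ⟨a, hat, hcosh⟩ := exists_cosh_sub_one_le_mul_exp_sub_one ht
    refine le_trans (ofReal_le_ofReal ?_) (ofReal_mul_exp_sub_sub_one_le_conjLogPhi hat)
    rwa [inv_mul_le_iff₀ four_pos]
  · exact (conjLogPhi_le_ofReal_exp_sub_sub_one t).trans
      (ofReal_le_ofReal (exp_sub_sub_one_le_two_mul_cosh_sub_one t))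
end

section
/- If Φ(t) = cosh(t) − 1, then its Young conjugate satisfies Φ*(t) ≍ t ln(1+t), i.e., there exist constants c, C > 0 with c · t ln(1+t) ≤ Φ*(t) ≤ C · t ln(1+t) for all t ≥ 0. -/
/-!
The supremum defining `Φ*(t)` is attained at `s = arsinh t`, by the tangent line inequality for the
convex function `cosh`; this gives `Φ*(t) ≤ t arsinh t ≤ 2 t log (1 + t)`. For the lower bound
it suffices to test `s = log (1 + t)`, where `cosh s - 1 = t² / (2 (1 + t))`, and
`log (1 + t) ≥ t / (1 + t)`.
-/

open Real ENNReal

/-- The Young conjugate of `Φ(s) = cosh(s) − 1`, as an `ℝ≥0∞`-valued supremum. -/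
noncomputable def conjCoshPhi (t : ℝ) : ℝ≥0∞ :=
  ⨆ (s : ℝ) (_ : 0 ≤ s), ENNReal.ofReal (s * t - (Real.cosh s - 1))

namespace Real

theorem cosh_add_mul_sinh_le_cosh_add (x y : ℝ) : cosh x + y * sinh x ≤ cosh (x + y) := by
  have hy := add_one_le_exp y
  have hny := add_one_le_exp (-y)
  rw [cosh_eq, cosh_eq, sinh_eq, exp_add, neg_add, exp_add]
  nlinarith [mul_le_mul_of_nonneg_left hy (exp_pos x).le,
    mul_le_mul_of_nonneg_left hny (exp_pos (-x)).le]

theorem arsinh_le_two_mul_log_one_add {t : ℝ} (ht : 0 ≤ t) : arsinh t ≤ 2 * log (1 + t) := by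
  have hsqrt : √(1 + t ^ 2) ≤ 1 + t := (sqrt_le_left (by linarith)).2 (by nlinarith)
  rw [arsinh, show 2 * log (1 + t) = log ((1 + t) ^ 2) by rw [log_pow]; norm_num]
  exact log_le_log (by positivity) (by nlinarith)

end Real

theorem conjCoshPhi_le_ofReal_mul_arsinh (t : ℝ) :
    conjCoshPhi t ≤ ENNReal.ofReal (t * arsinh t) := by
  refine iSup₂_le fun s _ => ENNReal.ofReal_le_ofReal ?_
  have htangent := cosh_add_mul_sinh_le_cosh_add (arsinh t) (s - arsinh t)
  rw [add_sub_cancel, sinh_arsinh] at htangent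
  nlinarith [one_le_cosh (arsinh t)]

theorem ofReal_mul_log_div_two_le_conjCoshPhi {t : ℝ} (ht : 0 ≤ t) :
    ENNReal.ofReal (t * Real.log (1 + t) / 2) ≤ conjCoshPhi t := by
  have hu : 0 < 1 + t := by linarith
  refine le_trans (ENNReal.ofReal_le_ofReal ?_)
    (le_iSup₂ (f := fun s (_ : 0 ≤ s) => ENNReal.ofReal (s * t - (cosh s - 1)))
      (Real.log (1 + t)) (Real.log_nonneg (by linarith)))
  have hlog := one_sub_inv_le_log_of_pos hu
  have hcosh : cosh (Real.log (1 + t)) - 1 = t * (1 - (1 + t)⁻¹) / 2 := by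
    rw [cosh_log hu]
    field_simp
    ring
  rw [hcosh]
  nlinarith [mul_le_mul_of_nonneg_left hlog ht]

/-- If `Φ(t) = cosh(t) − 1`, then `Φ*(t) ≍ t ln(1+t)`. -/
theorem conj_cosh_asymp_tlog :
    ∃ c C : ℝ, 0 < c ∧ 0 < C ∧ ∀ t : ℝ, 0 ≤ t →
      ENNReal.ofReal (c * (t * Real.log (1 + t))) ≤ conjCoshPhi t ∧
      conjCoshPhi t ≤ ENNReal.ofReal (C * (t * Real.log (1 + t))) := by
  refine ⟨1 / 2, 2, by norm_num, by norm_num, fun t ht => ⟨?_, ?_⟩⟩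
  · calc ENNReal.ofReal (1 / 2 * (t * Real.log (1 + t)))
        = ENNReal.ofReal (t * Real.log (1 + t) / 2) := by ring_nf
      _ ≤ conjCoshPhi t := ofReal_mul_log_div_two_le_conjCoshPhi ht
  · calc conjCoshPhi t ≤ ENNReal.ofReal (t * arsinh t) := conjCoshPhi_le_ofReal_mul_arsinh t
      _ ≤ ENNReal.ofReal (2 * (t * Real.log (1 + t))) := ENNReal.ofReal_le_ofReal <| by
        nlinarith [mul_le_mul_of_nonneg_left (arsinh_le_two_mul_log_one_add ht) ht]
end
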